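/- If α = 1/2, then the odd-case para-Racah recurrence coefficients are mirror-symmetric: b_n = b_{N-n} for all n = 0, 1, …, N, and u_n = u_{N-n+1} for all n = 1, 2, …, N. -/
import Mathlib


open Filter Topology Polynomial

noncomputable section

/-- The recurrence coefficient `bₙ` of the para-Racah polynomials, odd case `N = 2j+1`. -/
def bOdd (j : ℕ) (a c α : ℝ) (n : ℕ) : ℝ :=
  if n = j then
    -a ^ 2 - (j : ℝ) * (1 + a - c) * (1 + a + c + j) / 2 + α * (a - c) * (1 + (j : ℝ)) * (a + c + j)
  else if n = j + 1 then
    -a ^ 2 - (j : ℝ) * (1 + a - c) * (1 + a + c + j) / 2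
      + (1 - α) * (a - c) * (1 + (j : ℝ)) * (a + c + j)
  else
    -(a * (a + j) + c * (c + j) + (n : ℝ) * ((2 * (j : ℝ) + 1) - n)) / 2

/-- The recurrence coefficient `uₙ` of the para-Racah polynomials, odd case `N = 2j+1`. -/
def uOdd (j : ℕ) (a c α : ℝ) (n : ℕ) : ℝ :=
  if n = j + 1 then
    α * (1 - α) * (a - c) ^ 2 * (1 + (j : ℝ)) ^ 2 * (a + c + j) ^ 2
  else
    (n : ℝ) * ((2 * (j : ℝ) + 1) + 1 - n) * ((2 * (j : ℝ) + 1) - n + a + c) * ((n : ℝ) - 1 + a + c)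
        * (((n : ℝ) - j - 1) ^ 2 - (a - c) ^ 2) /
      (4 * ((2 * (j : ℝ) + 1) - 2 * n) * ((2 * (j : ℝ) + 1) - 2 * n + 2))


set_option maxHeartbeats 1000000 in
theorem paraRacahOdd_mirror_symmetry (j : ℕ) (a c α : ℝ) (hα : α = 1 / 2) :
    (∀ n : ℕ, n ≤ 2 * j + 1 → bOdd j a c α n = bOdd j a c α (2 * j + 1 - n)) ∧
    (∀ n : ℕ, 1 ≤ n → n ≤ 2 * j + 1 → uOdd j a c α n = uOdd j a c α (2 * j + 1 - n + 1)) := by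
  subst hα
  have hne : j + 1 ≠ j := by omega
  constructor
  · intro n hn
    rcases eq_or_ne j n with rfl | hj'
    all_goals try have hj := hj'.symm
    · have h1 : 2 * j + 1 - j = j + 1 := by omega
      rw [h1]
      unfold bOdd
      rw [if_pos rfl, if_neg hne, if_pos rfl]
      ring
    · rcases eq_or_ne (j + 1) n with rfl | hj1'
      all_goals try have hj1 := hj1'.symm
      · have h1 : 2 * j + 1 - (j + 1) = j := by omega
        rw [h1]
        unfold bOdd
        rw [if_neg hne, if_pos rfl, if_pos rfl]
        ring
      · have h1 : 2 * j + 1 - n ≠ j := by omega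
        have h2 : 2 * j + 1 - n ≠ j + 1 := by omega
        have hc : ((2 * j + 1 - n : ℕ) : ℝ) = 2 * j + 1 - n := by
          push_cast [Nat.cast_sub hn]; ring
        unfold bOdd
        rw [if_neg hj, if_neg hj1, if_neg h1, if_neg h2, hc]
        ring
  · intro n hn1 hn
    rcases eq_or_ne (j + 1) n with rfl | hj1'
    all_goals try have hj1 := hj1'.symm
    · have h1 : 2 * j + 1 - (j + 1) + 1 = j + 1 := by omega
      rw [h1]
    · have h1 : 2 * j + 1 - n + 1 ≠ j + 1 := by omega
      have hc : ((2 * j + 1 - n + 1 : ℕ) : ℝ) = 2 * j + 1 - n + 1 := by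
        push_cast [Nat.cast_sub hn]; ring
      unfold uOdd
      rw [if_neg hj1, if_neg h1, hc]
      have hz1 : (2 * (j : ℤ) + 1) - 2 * n ≠ 0 := by omega
      have hz2 : (2 * (j : ℤ) + 1) - 2 * n + 2 ≠ 0 := by omega
      have d1 : (2 * (j : ℝ) + 1) - 2 * n ≠ 0 := by
        intro h; apply hz1
        have : ((2 * (j : ℤ) + 1 - 2 * n : ℤ) : ℝ) = 0 := by push_cast; linarith
        exact_mod_cast this
      have d2 : (2 * (j : ℝ) + 1) - 2 * n + 2 ≠ 0 := by
        intro h; apply hz2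
        have : ((2 * (j : ℤ) + 1 - 2 * n + 2 : ℤ) : ℝ) = 0 := by push_cast; linarith
        exact_mod_cast this
      have d3 : (2 * (j : ℝ) + 1) - 2 * ((2 * (j : ℝ) + 1) - n + 1) ≠ 0 := by
        intro h; apply d2; linarith
      have d4 : (2 * (j : ℝ) + 1) - 2 * ((2 * (j : ℝ) + 1) - n + 1) + 2 ≠ 0 := by
        intro h; apply d1; linarith
      rw [div_eq_div_iff (by positivity) (by positivity)]
      ring
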